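/- Let A be an L×L real symmetric positive semidefinite matrix that is strictly diagonally dominant with positive diagonal, i.e., for every i, A_{ii} > Σ_{j≠i} |A_{ij}|. Then A is invertible, and every eigenvalue μ of A⁻¹ satisfies, for some index i, |μ − 1/A_{ii}| ≤ r_i / (A_{ii}(1 − r_i)), where r_i = (Σ_{j≠i} |A_{ij}|)/A_{ii} < 1. -/

import Mathlib

open Matrix Finset

/-! An eigenvector of `A⁻¹` for `μ` is an eigenvector of `A` for `μ⁻¹`, so Gershgorin's theorem puts
`μ⁻¹` in a disk around some `a = A i i` of radius `r < a`. For `x` in that disk,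
`|x⁻¹ - a⁻¹| = |x - a| / (|x| a) ≤ r / ((a - r) a)` since `|x| ≥ a - r > 0`. -/

theorem abs_inv_sub_inv_le_of_abs_sub_le {a r x : ℝ} (hra : r < a) (hx : |x - a| ≤ r) :
    |x⁻¹ - a⁻¹| ≤ r / (a * (a - r)) := by
  have ha : 0 < a := (abs_nonneg _).trans hx |>.trans_lt hra
  have hx_lower : a - r ≤ |x| := by
    linarith [abs_sub_abs_le_abs_sub a x, abs_sub_comm x a, abs_of_pos ha]
  have hx_pos : 0 < |x| := (sub_pos.2 hra).trans_le hx_lower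
  calc |x⁻¹ - a⁻¹| = |x - a| / (|x| * a) := by
        rw [inv_sub_inv (abs_pos.1 hx_pos) ha.ne', abs_div, abs_mul, abs_of_pos ha, abs_sub_comm]
    _ ≤ r / ((a - r) * a) :=
        div_le_div₀ ((abs_nonneg _).trans hx) hx
          (mul_pos (sub_pos.2 hra) ha) (mul_le_mul_of_nonneg_right hx_lower ha.le)
    _ = r / (a * (a - r)) := by rw [mul_comm]

theorem Matrix.hasEigenvector_toLin'_of_nonsing_inv {K n : Type*} [Field K] [Fintype n]
    [DecidableEq n] {A : Matrix n n K} (hA : IsUnit A.det) {μ : K} {v : n → K}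
    (h : Module.End.HasEigenvector (toLin' A⁻¹) μ v) :
    Module.End.HasEigenvector (toLin' A) μ⁻¹ v := by
  rw [Module.End.hasEigenvector_iff, Module.End.mem_eigenspace_iff, toLin'_apply] at h ⊢
  obtain ⟨hinv, hv⟩ := h
  have hAμ : μ • A *ᵥ v = v := by
    rw [← mulVec_smul, ← hinv, mulVec_mulVec, mul_nonsing_inv A hA, one_mulVec]
  have hμ : μ ≠ 0 := by
    rintro rfl
    exact hv (by rw [← hAμ, zero_smul])
  refine ⟨?_, hv⟩
  calc A *ᵥ v = μ⁻¹ • μ • A *ᵥ v := (inv_smul_smul₀ hμ _).symm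
    _ = μ⁻¹ • v := by rw [hAμ]

theorem inv_eigenvalue_gershgorin_general (L : ℕ)
    (A : Matrix (Fin L) (Fin L) ℝ)
    (hdom : ∀ i, (∑ j ∈ Finset.univ.erase i, |A i j|) < A i i) :
    IsUnit A.det ∧
    (∀ i, (∑ j ∈ Finset.univ.erase i, |A i j|) / A i i < 1) ∧
    (∀ (μ : ℝ) (v : Fin L → ℝ), v ≠ 0 → A⁻¹.mulVec v = μ • v →
      ∃ i, |μ - 1 / A i i| ≤
        ((∑ j ∈ Finset.univ.erase i, |A i j|) / A i i) /
          (A i i * (1 - (∑ j ∈ Finset.univ.erase i, |A i j|) / A i i))) := by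
  have hdiag : ∀ i, 0 < A i i := fun i => (sum_nonneg fun j _ => abs_nonneg _).trans_lt (hdom i)
  have hdet : IsUnit A.det := (det_ne_zero_of_sum_row_lt_diag fun k => by
    simpa only [Real.norm_eq_abs, abs_of_pos (hdiag k)] using hdom k).isUnit
  refine ⟨hdet, fun i => (div_lt_one (hdiag i)).2 (hdom i), fun μ v hv hμv => ?_⟩
  have hvec : Module.End.HasEigenvector (toLin' A⁻¹) μ v :=
    Module.End.hasEigenvector_iff.2 ⟨by rwa [Module.End.mem_eigenspace_iff, toLin'_apply], hv⟩
  obtain ⟨i, hi⟩ := eigenvalue_mem_ball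
    (Module.End.hasEigenvalue_of_hasEigenvector (hasEigenvector_toLin'_of_nonsing_inv hdet hvec))
  rw [Metric.mem_closedBall, Real.dist_eq] at hi
  simp only [Real.norm_eq_abs] at hi
  refine ⟨i, ?_⟩
  set r := ∑ j ∈ univ.erase i, |A i j|
  have hradius : r / A i i / (A i i * (1 - r / A i i)) = r / (A i i * (A i i - r)) := by
    field_simp [(hdiag i).ne']
  simpa only [hradius, inv_inv, one_div] using abs_inv_sub_inv_le_of_abs_sub_le (hdom i) hi

/-- Gershgorin-type bound: if a real symmetric positive semidefinite matrix `A` is strictly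
diagonally dominant with positive diagonal, then `A` is invertible and every eigenvalue `μ`
of `A⁻¹` lies in some disk centered at `1/A_{ii}` of radius `r_i / (A_{ii} (1 - r_i))`,
where `r_i = (Σ_{j≠i} |A_{ij}|) / A_{ii} < 1`. -/
theorem inv_eigenvalue_gershgorin (L : ℕ) (hL : 1 ≤ L)
    (A : Matrix (Fin L) (Fin L) ℝ) (hA : A.PosSemidef)
    (hdom : ∀ i, (∑ j ∈ Finset.univ.erase i, |A i j|) < A i i) :
    IsUnit A.det ∧
    (∀ i, (∑ j ∈ Finset.univ.erase i, |A i j|) / A i i < 1) ∧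
    (∀ (μ : ℝ) (v : Fin L → ℝ), v ≠ 0 → A⁻¹.mulVec v = μ • v →
      ∃ i, |μ - 1 / A i i| ≤
        ((∑ j ∈ Finset.univ.erase i, |A i j|) / A i i) /
          (A i i * (1 - (∑ j ∈ Finset.univ.erase i, |A i j|) / A i i))) :=
  inv_eigenvalue_gershgorin_general L A hdom
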